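/- Let S be a saw with backbone (v₁, ..., v_{2k+1}, v₁). If P(x, y) is a path of order 2k + 1 along the backbone cycle, then P has a q-reduction for every q ∈ [k + 2, 2k + 1]. -/

import Mathlib

open SimpleGraph

open Fin.NatCast in
/-- `S` is a saw on the vertex set `Fin (2k+1)`: it contains the Hamiltonian backbone
cycle `(0, 1, ..., 2k, 0)` together with the chords `(2t, 2t+2)` for `0 ≤ t < k`
(in 1-based notation, the chords `(v_{2s−1}, v_{2s+1})` for `s ∈ [1, k]`). -/
def IsSawGraph (k : ℕ) (S : SimpleGraph (Fin (2 * k + 1))) : Prop :=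
  (∀ i : Fin (2 * k + 1), S.Adj i (i + 1)) ∧
  (∀ t : ℕ, t < k →
    S.Adj ((2 * t : ℕ) : Fin (2 * k + 1)) ((2 * t + 2 : ℕ) : Fin (2 * k + 1)))

/-- A walk is along the backbone cycle if all of its edges are edges of the backbone
cycle `(0, 1, ..., 2k, 0)`. -/
def AlongBackbone {k : ℕ} {S : SimpleGraph (Fin (2 * k + 1))} {x y : Fin (2 * k + 1)}
    (P : S.Walk x y) : Prop :=
  ∀ e ∈ P.edges, ∃ i : Fin (2 * k + 1), e = s(i, i + 1)

open Fin.NatCast Fin.CommRing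

section Generic

variable {V : Type*} {G : SimpleGraph V}

private def mkWalk (G : SimpleGraph V) :
    (x : V) → (l : List V) → List.Chain G.Adj x l → G.Walk x (l.getLastD x)
  | _, [], _ => Walk.nil
  | x, y :: l, h =>
      (Walk.cons (List.chain_cons.mp h).1 (mkWalk G y l (List.chain_cons.mp h).2)).copy rfl
        (List.getLastD_cons (a := x) (b := y) (l := l)).symm

private theorem mkWalk_support (G : SimpleGraph V) :
    ∀ (x : V) (l : List V) (h : List.Chain G.Adj x l), (mkWalk G x l h).support = x :: l
  | _, [], _ => rfl
  | x, y :: l, h => by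
      simp only [mkWalk, Walk.support_copy, Walk.support_cons, mkWalk_support]
      exact congrArg (x :: ·) (mkWalk_support G y l _)

private theorem mkWalk_length (G : SimpleGraph V) :
    ∀ (x : V) (l : List V) (h : List.Chain G.Adj x l), (mkWalk G x l h).length = l.length
  | _, [], _ => rfl
  | x, y :: l, h => by
      simp only [mkWalk, Walk.length_copy, Walk.length_cons, mkWalk_length, List.length_cons]
      exact congrArg (· + 1) (mkWalk_length G y l _)

private lemma walk_of_list (G : SimpleGraph V) (l : List V) (x y : V)
    (h1 : l.head? = some x) (h2 : l.getLast? = some y) (hc : l.Chain' G.Adj) :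
    ∃ W : G.Walk x y, W.support = l ∧ W.length + 1 = l.length := by
  cases l with
  | nil => simp at h1
  | cons z t =>
    have hz : x = z := by simpa using h1.symm
    subst hz
    have hc' : List.Chain G.Adj x t := hc
    have hlast : t.getLastD x = y := by
      rw [List.getLast?_cons] at h2
      rw [List.getLastD_eq_getLast?]
      simpa using h2
    refine ⟨(mkWalk G x t hc').copy rfl hlast, ?_, ?_⟩
    · rw [Walk.support_copy, mkWalk_support]
    · rw [Walk.length_copy, mkWalk_length, List.length_cons]

private lemma head?_map_range {α : Type*} (f : ℕ → α) (n : ℕ) :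
    (List.map f (List.range (n+1))).head? = some (f 0) := by
  rw [List.range_succ_eq_map]; rfl

private lemma getLast?_map_range {α : Type*} (f : ℕ → α) (n : ℕ) :
    (List.map f (List.range (n+1))).getLast? = some (f n) := by
  rw [List.range_succ, List.map_append]
  exact List.getLast?_concat

private lemma step_shift {n : ℕ} [NeZero n] (x u : Fin n) (ε : Fin n) (hd : u = x + ε) (m : ℕ) :
    x :: List.map (fun i : ℕ => u + (i : Fin n) * ε) (List.range (m+1)) =
      List.map (fun i : ℕ => x + (i : Fin n) * ε) (List.range (m+2)) := by
  conv_rhs => rw [show m + 2 = (m + 1) + 1 from rfl, List.range_succ_eq_map]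
  simp only [List.map_cons, List.map_map]
  have h1 : x = x + ((0:ℕ) : Fin n) * ε := by push_cast; ring
  refine List.cons_eq_cons.mpr ⟨h1, ?_⟩
  apply List.map_congr_left
  intro i _
  simp only [Function.comp_apply, hd, Nat.succ_eq_add_one]
  push_cast
  ring

end Generic

section Saw

variable {k : ℕ} {S : SimpleGraph (Fin (2 * k + 1))}

private theorem backbone_support {x y : Fin (2*k+1)}
    (P : S.Walk x y) (hP : P.IsPath) (hPb : AlongBackbone P) :
    P.support = (List.range (P.length+1)).map (fun i : ℕ => x + (i : Fin (2*k+1)) * 1) ∨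
    P.support = (List.range (P.length+1)).map (fun i : ℕ => x + (i : Fin (2*k+1)) * (-1)) := by
  induction P with
  | nil => left; simp [List.range_succ]
  | @cons x u y h' p ih =>
    have hp : p.IsPath ∧ x ∉ p.support := (Walk.cons_isPath_iff h' p).mp hP
    have hpb : AlongBackbone p := fun e he =>
      hPb e (by rw [Walk.edges_cons]; exact List.mem_cons_of_mem _ he)
    obtain ⟨i, hi⟩ := hPb _ (by rw [Walk.edges_cons]; exact List.mem_cons_self)
    have hdir : u = x + 1 ∨ u = x + (-1) := by
      rcases Sym2.eq_iff.mp hi with ⟨h1, h2⟩ | ⟨h1, h2⟩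
      · left; rw [h1, h2]
      · right; rw [h1, h2]; ring
    rcases ih hp.1 hpb with hsup | hsup <;> rcases hdir with hd | hd
    · left
      rw [Walk.support_cons, hsup, Walk.length_cons]
      exact step_shift x u 1 hd p.length
    · rcases Nat.eq_zero_or_pos p.length with h0 | h0
      · right
        rw [Walk.support_cons, hsup, Walk.length_cons, h0]
        simp [List.range_succ, hd]
      · exfalso
        apply hp.2
        rw [hsup]
        refine List.mem_map.mpr ⟨1, by simp; omega, ?_⟩
        rw [hd]; push_cast; ring
    · rcases Nat.eq_zero_or_pos p.length with h0 | h0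
      · left
        rw [Walk.support_cons, hsup, Walk.length_cons, h0]
        simp [List.range_succ, hd]
      · exfalso
        apply hp.2
        rw [hsup]
        refine List.mem_map.mpr ⟨1, by simp; omega, ?_⟩
        rw [hd]; push_cast; ring
    · right
      rw [Walk.support_cons, hsup, Walk.length_cons]
      exact step_shift x u (-1) hd p.length

private lemma hval (a : Fin (2*k+1)) (i : ℕ) :
    ((a + (i : Fin (2*k+1))) : Fin (2*k+1)).val = (a.val + i) % (2*k+1) := by
  rw [Fin.add_def, Fin.val_natCast]
  conv_rhs => rw [Nat.add_mod]
  rw [Nat.mod_eq_of_lt a.isLt]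

private lemma cast_add_inj (a : Fin (2*k+1)) {i i' : ℕ} (hi : i ≤ 2*k) (hi' : i' ≤ 2*k)
    (h : a + (i : Fin (2*k+1)) = a + (i' : Fin (2*k+1))) : i = i' := by
  have h2 : (i : Fin (2*k+1)) = (i' : Fin (2*k+1)) := add_left_cancel h
  have h3 := congrArg Fin.val h2
  rw [Fin.val_natCast, Fin.val_natCast, Nat.mod_eq_of_lt (by omega),
    Nat.mod_eq_of_lt (by omega)] at h3
  exact h3

private lemma hA1 (hS : IsSawGraph k S) (a : Fin (2*k+1)) (i : ℕ) :
    S.Adj (a + (i : Fin (2*k+1))) (a + ((i+1 : ℕ) : Fin (2*k+1))) := by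
  have h : (a + ((i+1:ℕ) : Fin (2*k+1))) = (a + (i : Fin (2*k+1))) + 1 := by push_cast; ring
  rw [h]; exact hS.1 _

private lemma hA2 (hS : IsSawGraph k S) (a : Fin (2*k+1)) (i t : ℕ) (ht : t < k)
    (hmod : (a.val + i) % (2*k+1) = 2*t) :
    S.Adj (a + (i : Fin (2*k+1))) (a + ((i+2 : ℕ) : Fin (2*k+1))) := by
  have e1 : a + (i : Fin (2*k+1)) = ((2*t : ℕ) : Fin (2*k+1)) := by
    apply Fin.ext
    rw [hval, hmod, Fin.val_natCast, Nat.mod_eq_of_lt (by omega)]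
  have hmod2 : (a.val + (i+2)) % (2*k+1) = 2*t+2 := by
    rw [show a.val + (i+2) = (a.val + i) + 2 by ring, Nat.add_mod, hmod,
      Nat.mod_eq_of_lt (show 2 < 2*k+1 by omega), Nat.mod_eq_of_lt (show 2*t+2 < 2*k+1 by omega)]
  have e2 : a + ((i+2 : ℕ) : Fin (2*k+1)) = ((2*t+2 : ℕ) : Fin (2*k+1)) := by
    apply Fin.ext
    rw [hval, hmod2, Fin.val_natCast, Nat.mod_eq_of_lt (by omega)]
  rw [e1, e2]
  exact hS.2 t ht

private lemma chainA (hS : IsSawGraph k S) (a : Fin (2*k+1)) (c m : ℕ)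
    (hcm : a.val + c + 2*m = 2*k) :
    List.Chain' S.Adj ((List.range (c+m+1)).map
      (fun s => a + ((s + (s - c) : ℕ) : Fin (2*k+1)))) := by
  rw [List.Chain', List.isChain_map, List.isChain_range_succ]
  intro s hs
  by_cases hsc : s < c
  · rw [show s + 1 + (s + 1 - c) = (s + (s - c)) + 1 by omega]
    exact hA1 hS a _
  · rw [show s + 1 + (s + 1 - c) = (s + (s - c)) + 2 by omega]
    refine hA2 hS a _ (a.val + s + m - k) (by omega) ?_
    rw [show a.val + (s + (s - c)) = 2*(a.val + s + m - k) by omega]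
    exact Nat.mod_eq_of_lt (by omega)

private lemma chainB (hS : IsSawGraph k S) (a : Fin (2*k+1)) (b m n : ℕ)
    (hb : a.val + b = 2*k+1) (hmn : b + 2*m + n = 2*k) :
    List.Chain' S.Adj ((List.range (m+n+1)).map
      (fun s => a + ((b + s + min s m : ℕ) : Fin (2*k+1)))) := by
  have ha := a.isLt
  rw [List.Chain', List.isChain_map, List.isChain_range_succ]
  intro s hs
  by_cases hsm : s < m
  · rw [show b + (s+1) + min (s+1) m = (b + s + min s m) + 2 by omega]
    refine hA2 hS a _ s (by omega) ?_
    rw [show a.val + (b + s + min s m) = (2*k+1) + 2*s by omega, Nat.add_mod_left]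
    exact Nat.mod_eq_of_lt (by omega)
  · rw [show b + (s+1) + min (s+1) m = (b + s + min s m) + 1 by omega]
    exact hA1 hS a _

private lemma build (hS : IsSawGraph k S) (a : Fin (2*k+1)) (j : ℕ) (hj : j + 1 ≤ k) :
    ∃ Q : S.Walk a (a + ((2*k : ℕ) : Fin (2*k+1))), Q.IsPath ∧ Q.length = 2*k - j := by
  have ha := a.isLt
  by_cases hα : a.val = 0
  · -- start at label `0` : a single block suffices
    have hcm : a.val + (2*k - 2*j) + 2*j = 2*k := by omega
    obtain ⟨W, hsup, hlen⟩ := walk_of_list S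
      ((List.range ((2*k - 2*j)+j+1)).map
        (fun s => a + ((s + (s - (2*k - 2*j)) : ℕ) : Fin (2*k+1))))
      a (a + ((2*k : ℕ) : Fin (2*k+1)))
      (by rw [head?_map_range]
          congr 1
          simp)
      (by rw [getLast?_map_range]
          congr 1
          rw [show (2*k - 2*j) + j + ((2*k - 2*j) + j - (2*k - 2*j)) = 2*k by omega])
      (chainA hS a (2*k - 2*j) j hcm)
    refine ⟨W, ?_, ?_⟩
    · rw [Walk.isPath_def, hsup]
      refine List.Nodup.map_on ?_ List.nodup_range
      intro s hs s' hs' heq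
      rw [List.mem_range] at hs hs'
      have := cast_add_inj a (i := s + (s - (2*k-2*j))) (i' := s' + (s' - (2*k-2*j)))
        (by omega) (by omega) heq
      omega
    · rw [List.length_map, List.length_range] at hlen
      omega
  · -- general case : two blocks of chords
    set w := 2*k - a.val with hw
    set j1 := min j (w/2) with hj1
    set j2 := j - j1 with hj2
    set c := w - 2*j1 with hc
    set b := w + 1 with hb0
    set n2 := a.val - 1 - 2*j2 with hn2
    have hf1 : 2*j1 ≤ w := by omega
    have hf2 : 2*j2 + 1 ≤ a.val := by omega
    have hcm : a.val + c + 2*j1 = 2*k := by omega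
    have hbb : a.val + b = 2*k+1 := by omega
    have hmn : b + 2*j2 + n2 = 2*k := by omega
    set fA : ℕ → Fin (2*k+1) := fun s => a + ((s + (s - c) : ℕ) : Fin (2*k+1)) with hfA
    set fB : ℕ → Fin (2*k+1) := fun s => a + ((b + s + min s j2 : ℕ) : Fin (2*k+1)) with hfB
    obtain ⟨W, hsup, hlen⟩ := walk_of_list S
      (((List.range (c+j1+1)).map fA) ++ ((List.range (j2+n2+1)).map fB))
      a (a + ((2*k : ℕ) : Fin (2*k+1)))
      (by rw [List.head?_append, head?_map_range]
          have : fA 0 = a := by simp [hfA]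
          rw [this]
          rfl)
      (by rw [List.getLast?_append, getLast?_map_range]
          have : fB (j2+n2) = a + ((2*k : ℕ) : Fin (2*k+1)) := by
            show a + ((b + (j2+n2) + min (j2+n2) j2 : ℕ) : Fin (2*k+1)) = _
            rw [show b + (j2+n2) + min (j2+n2) j2 = 2*k by omega]
          rw [this]
          rfl)
      (by refine List.isChain_append.mpr ⟨chainA hS a c j1 hcm, chainB hS a b j2 n2 hbb hmn, ?_⟩
          intro p hp q hq
          rw [getLast?_map_range, Option.mem_def, Option.some_inj] at hp
          rw [head?_map_range, Option.mem_def, Option.some_inj] at hq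
          subst hp hq
          show S.Adj (a + ((c + j1 + (c + j1 - c) : ℕ) : Fin (2*k+1)))
            (a + ((b + 0 + min 0 j2 : ℕ) : Fin (2*k+1)))
          rw [show c + j1 + (c + j1 - c) = w by omega, show b + 0 + min 0 j2 = w + 1 by omega]
          exact hA1 hS a w)
    refine ⟨W, ?_, ?_⟩
    · rw [Walk.isPath_def, hsup, List.nodup_append]
      refine ⟨?_, ?_, ?_⟩
      · refine List.Nodup.map_on ?_ List.nodup_range
        intro s hs s' hs' heq
        rw [List.mem_range] at hs hs'
        have := cast_add_inj a (i := s + (s - c)) (i' := s' + (s' - c)) (by omega) (by omega) heq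
        omega
      · refine List.Nodup.map_on ?_ List.nodup_range
        intro s hs s' hs' heq
        rw [List.mem_range] at hs hs'
        have := cast_add_inj a (i := b + s + min s j2) (i' := b + s' + min s' j2)
          (by omega) (by omega) heq
        omega
      · rintro p hp q hq rfl
        rw [List.mem_map] at hp hq
        obtain ⟨s, hs, rfl⟩ := hp
        obtain ⟨s', hs', heq⟩ := hq
        rw [List.mem_range] at hs hs'
        have := cast_add_inj a (i := b + s' + min s' j2) (i' := s + (s - c))
          (by omega) (by omega) heq
        omega
    · rw [List.length_append, List.length_map, List.length_range,
        List.length_map, List.length_range] at hlen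
      omega

end Saw

/-- Let `S` be a saw with backbone `(v₁, ..., v_{2k+1}, v₁)`. If `P(x, y)` is a path of
order `2k + 1` along the backbone cycle, then `P` has a `q`-reduction for every
`q ∈ [k + 2, 2k + 1]`, i.e. an `xy`-path of order `q` all of whose vertices lie on `P`. -/
theorem saw_full_path_reduction (k : ℕ) (hk : 1 ≤ k)
    (S : SimpleGraph (Fin (2 * k + 1))) (hS : IsSawGraph k S)
    (x y : Fin (2 * k + 1)) (P : S.Walk x y) (hP : P.IsPath) (hPb : AlongBackbone P)
    (hlen : P.length + 1 = 2 * k + 1) :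
    ∀ q : ℕ, k + 2 ≤ q → q ≤ 2 * k + 1 →
      ∃ Q : S.Walk x y, Q.IsPath ∧ (∀ z ∈ Q.support, z ∈ P.support) ∧
        Q.length + 1 = q := by
  intro q hq1 hq2
  have hL : P.length = 2*k := by omega
  have hy : P.support.getLast? = some y := by
    rw [List.getLast?_eq_getLast P.support_ne_nil]
    exact congrArg some P.getLast_support
  rcases backbone_support P hP hPb with hsup | hsup
  · -- forward direction : y = x + 2k
    have hy2 : y = x + ((2*k : ℕ) : Fin (2*k+1)) * 1 := by
      rw [hsup, hL, getLast?_map_range] at hy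
      exact (Option.some_inj.mp hy).symm
    have hy3 : y = x + ((2*k : ℕ) : Fin (2*k+1)) := by rw [hy2, mul_one]
    obtain ⟨Q0, hQp, hQl⟩ := build hS x (2*k + 1 - q) (by omega)
    refine ⟨Q0.copy rfl hy3.symm, ?_, ?_, ?_⟩
    · rw [Walk.isPath_def, Walk.support_copy, ← Walk.isPath_def]
      exact hQp
    · intro z _
      rw [hsup, hL]
      refine List.mem_map.mpr ⟨(z - x).val, by rw [List.mem_range]; exact (z - x).isLt, ?_⟩
      rw [mul_one, Fin.cast_val_eq_self]
      ring
    · rw [Walk.length_copy]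
      omega
  · -- backward direction : x = y + 2k
    have hy2 : y = x + ((2*k : ℕ) : Fin (2*k+1)) * (-1) := by
      rw [hsup, hL, getLast?_map_range] at hy
      exact (Option.some_inj.mp hy).symm
    have hy3 : y + ((2*k : ℕ) : Fin (2*k+1)) = x := by rw [hy2]; ring
    obtain ⟨Q0, hQp, hQl⟩ := build hS y (2*k + 1 - q) (by omega)
    refine ⟨(Q0.copy rfl hy3).reverse, ?_, ?_, ?_⟩
    · rw [Walk.isPath_def, Walk.support_reverse, List.nodup_reverse, Walk.support_copy,
        ← Walk.isPath_def]
      exact hQp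
    · intro z _
      rw [hsup, hL]
      refine List.mem_map.mpr ⟨(x - z).val, by rw [List.mem_range]; exact (x - z).isLt, ?_⟩
      rw [Fin.cast_val_eq_self]
      ring
    · rw [Walk.length_reverse, Walk.length_copy]
      omega
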